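/- Let n ≥ 2 and a > 0. There exists a constant κ ∈ (0, ∞), depending only on n and a, such that for every bounded open set U contained in the open upper half-space {x_n > 0} and every x ∈ U, the limit lim_{ε → 0⁺} ∫_U g_ε(x,y) dy exists and equals κ; in particular the limit is independent of U and of x. -/

import Mathlib

/-!
Substituting `y = x + √ε • w` turns `∫_U g_ε(x, y) dy` into the integral over `w` of
`(xₙ + √ε wₙ)^{a+2} (1 - ε)^{(a+2)/2} (|w|² + 4 xₙ (xₙ + √ε wₙ))^{-(a+n+2)/2}`, restricted to
the preimage of `U`, which exhausts `ℝⁿ` as `ε → 0`. For small `ε` this integrand is dominated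
by a multiple of `(1 + |w|²)^{-(a+n+2)/2}`, integrable because `a + 2 > 0`, so the limit is
`xₙ^{a+2} ∫ (|w|² + 4 xₙ²)^{-(a+n+2)/2} dw`. Rescaling `w` by `2 xₙ` shows that this equals
`κ = 2^{-(a+2)} ∫ (1 + |w|²)^{-(a+n+2)/2} dw`, independently of `x` and `U`.
-/

open MeasureTheory Filter

/-- The kernel `g_ε(x,y) = yₙ^{a+2} (ε(1−ε))^{(a+2)/2} (|x−y|² + 4ε xₙ yₙ)^{−(a+n+2)/2}`,
the `n`-th coordinate being the coordinate `i`. -/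
noncomputable def gker {n : ℕ} (a : ℝ) (i : Fin n) (ε : ℝ)
    (x y : EuclideanSpace ℝ (Fin n)) : ℝ :=
  (y i) ^ (a + 2) * (ε * (1 - ε)) ^ ((a + 2) / 2) *
    (‖x - y‖ ^ 2 + 4 * ε * x i * y i) ^ (-(a + (n : ℝ) + 2) / 2)

open Real Topology Set Module

section HaarScaling

variable {E : Type*} [NormedAddCommGroup E] [NormedSpace ℝ E] [FiniteDimensional ℝ E]
  [MeasurableSpace E] [BorelSpace E] (μ : Measure E) [μ.IsAddHaarMeasure]

theorem integral_one_add_norm_sq_rpow_pos {r : ℝ} (hr : (finrank ℝ E : ℝ) < r) :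
    0 < ∫ v, (1 + ‖v‖ ^ 2) ^ (-r / 2) ∂μ := by
  have hcont : Continuous fun v : E => (1 + ‖v‖ ^ 2) ^ (-r / 2) := by
    refine (continuous_const.add (continuous_norm.pow 2)).rpow_const fun v => Or.inl ?_
    exact (by positivity : (0 : ℝ) < 1 + ‖v‖ ^ 2).ne'
  exact integral_pos_of_integrable_nonneg_nonzero (x := 0) hcont
    (integrable_rpow_neg_one_add_norm_sq hr) (fun v => by positivity) (by simp)

theorem integral_norm_sq_add_sq_rpow {c : ℝ} (hc : 0 < c) (r : ℝ) :
    ∫ v, (‖v‖ ^ 2 + c ^ 2) ^ (-r / 2) ∂μ =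
      c ^ ((finrank ℝ E : ℝ) - r) * ∫ v, (1 + ‖v‖ ^ 2) ^ (-r / 2) ∂μ := by
  have hscale (v : E) :
      (‖c • v‖ ^ 2 + c ^ 2) ^ (-r / 2) = c ^ (-r) * (1 + ‖v‖ ^ 2) ^ (-r / 2) := by
    rw [norm_smul, norm_of_nonneg hc.le, show (c * ‖v‖) ^ 2 + c ^ 2 = c ^ 2 * (1 + ‖v‖ ^ 2) by ring,
      mul_rpow (by positivity) (by positivity), ← rpow_natCast, ← rpow_mul hc.le]
    congr 2
    push_cast
    ring
  have h := Measure.integral_comp_smul_of_nonneg μ (fun v : E => (‖v‖ ^ 2 + c ^ 2) ^ (-r / 2)) c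
    (hR := hc.le)
  simp only [hscale, integral_const_mul, smul_eq_mul] at h
  rw [eq_inv_mul_iff_mul_eq₀ (by positivity)] at h
  rw [← h, ← mul_assoc, ← rpow_natCast, ← rpow_add hc, sub_eq_add_neg]

end HaarScaling

/-- With `t = xₙ`, `s = √ε`, `u = wₙ`, `N = ‖w‖`: a lower bound on the denominator of the
rescaled kernel, uniform in `ε` as long as `2 √ε < xₙ`. -/
theorem min_mul_one_add_sq_le {t s u N : ℝ} (ht : 0 < t) (hs : 0 ≤ s) (hst : 2 * s < t)
    (hu : |u| ≤ N) (hy : 0 < t + s * u) :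
    min (1 / 2) (2 * t ^ 2) * (1 + N ^ 2) ≤ N ^ 2 + 4 * t * (t + s * u) := by
  have hm₁ := min_le_left (1 / 2 : ℝ) (2 * t ^ 2)
  have hm₂ := min_le_right (1 / 2 : ℝ) (2 * t ^ 2)
  have hN : 0 ≤ N := (abs_nonneg u).trans hu
  rcases le_or_gt (2 * s * |u|) t with hsu | hsu
  · have : t ≤ 2 * (t + s * u) := by nlinarith [neg_abs_le u]
    nlinarith
  · have : 1 < |u| := by nlinarith
    nlinarith

section RescaledKernel

variable {n : ℕ} (a : ℝ) (i : Fin n) (x : EuclideanSpace ℝ (Fin n))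

noncomputable def rescaledKernel (ε : ℝ) (w : EuclideanSpace ℝ (Fin n)) : ℝ :=
  (x i + √ε * w i) ^ (a + 2) * (1 - ε) ^ ((a + 2) / 2) *
    (‖w‖ ^ 2 + 4 * x i * (x i + √ε * w i)) ^ (-(a + n + 2) / 2)

theorem sqrt_pow_mul_gker_add_sqrt_smul {ε : ℝ} (hε₀ : 0 < ε) (hε₁ : ε ≤ 1)
    {w : EuclideanSpace ℝ (Fin n)} (hx : 0 ≤ x i) (hy : 0 ≤ x i + √ε * w i) :
    √ε ^ n * gker a i ε x (x + √ε • w) = rescaledKernel a i x ε w := by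
  have hnorm : ‖x - (x + √ε • w)‖ ^ 2 = ε * ‖w‖ ^ 2 := by
    rw [sub_add_cancel_left, norm_neg, norm_smul, norm_of_nonneg (sqrt_nonneg ε), mul_pow,
      sq_sqrt hε₀.le]
  have hsqrt : √ε ^ n = ε ^ ((n : ℝ) / 2) := by
    rw [sqrt_eq_rpow, ← rpow_natCast, ← rpow_mul hε₀.le]
    ring_nf
  have hpow : ε ^ ((n : ℝ) / 2) * ε ^ ((a + 2) / 2) * ε ^ (-(a + n + 2) / 2) = 1 := by
    rw [← rpow_add hε₀, ← rpow_add hε₀]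
    ring_nf
    exact rpow_zero ε
  have hA : 0 ≤ ‖w‖ ^ 2 + 4 * x i * (x i + √ε * w i) := by positivity
  simp only [gker, rescaledKernel, PiLp.add_apply, PiLp.smul_apply, smul_eq_mul, hnorm]
  rw [show ε * ‖w‖ ^ 2 + 4 * ε * x i * (x i + √ε * w i) =
      ε * (‖w‖ ^ 2 + 4 * x i * (x i + √ε * w i)) by ring,
    mul_rpow hε₀.le hA, mul_rpow hε₀.le (by linarith), hsqrt]
  linear_combination (x i + √ε * w i) ^ (a + 2) * (1 - ε) ^ ((a + 2) / 2) *
    (‖w‖ ^ 2 + 4 * x i * (x i + √ε * w i)) ^ (-(a + n + 2) / 2) * hpow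

theorem integral_gker_eq_integral_indicator_rescaledKernel {U : Set (EuclideanSpace ℝ (Fin n))}
    (hU : MeasurableSet U) (hUi : U ⊆ {y | 0 < y i}) (hx : 0 ≤ x i) {ε : ℝ} (hε₀ : 0 < ε)
    (hε₁ : ε ≤ 1) :
    ∫ y in U, gker a i ε x y =
      ∫ w, ((x + √ε • ·) ⁻¹' U).indicator (rescaledKernel a i x ε) w := by
  have hscale := Measure.integral_comp_smul_of_nonneg volume
    (fun z => U.indicator (gker a i ε x) (x + z)) √ε (hR := sqrt_nonneg ε)
  rw [finrank_euclideanSpace_fin] at hscale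
  calc ∫ y in U, gker a i ε x y = ∫ z, U.indicator (gker a i ε x) (x + z) := by
        rw [← integral_indicator hU, integral_add_left_eq_self]
    _ = √ε ^ n * ∫ w, U.indicator (gker a i ε x) (x + √ε • w) := by
        rw [hscale, smul_eq_mul, mul_inv_cancel_left₀ (by positivity)]
    _ = _ := by
        rw [← integral_const_mul]
        congr 1 with w
        by_cases hw : x + √ε • w ∈ U
        · rw [indicator_of_mem hw, indicator_of_mem (by exact hw)]
          exact sqrt_pow_mul_gker_add_sqrt_smul a i x hε₀ hε₁ hx (by simpa using (hUi hw).le)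
        · rw [indicator_of_notMem hw, indicator_of_notMem (by exact hw), mul_zero]

theorem rescaledKernel_nonneg (hx : 0 ≤ x i) {ε : ℝ} (hε₁ : ε ≤ 1) {w : EuclideanSpace ℝ (Fin n)}
    (hy : 0 ≤ x i + √ε * w i) : 0 ≤ rescaledKernel a i x ε w :=
  mul_nonneg (mul_nonneg (rpow_nonneg hy _) (rpow_nonneg (by linarith) _))
    (rpow_nonneg (by positivity) _)

theorem rescaledKernel_le (ha : 0 ≤ a + 2) (hx : 0 < x i) {ε R : ℝ} (hε₀ : 0 ≤ ε) (hε₁ : ε ≤ 1)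
    (hεx : 2 * √ε < x i) {w : EuclideanSpace ℝ (Fin n)} (hy : 0 < x i + √ε * w i)
    (hyR : x i + √ε * w i ≤ R) :
    rescaledKernel a i x ε w ≤
      R ^ (a + 2) * min (1 / 2) (2 * x i ^ 2) ^ (-(a + n + 2) / 2) *
        (1 + ‖w‖ ^ 2) ^ (-(a + n + 2) / 2) := by
  have hm : 0 < min (1 / 2 : ℝ) (2 * x i ^ 2) := by positivity
  have hexp : -(a + n + 2) / 2 ≤ 0 := by
    have : (0 : ℝ) ≤ n := n.cast_nonneg
    linarith
  have hwi : |w i| ≤ ‖w‖ := by simpa using PiLp.norm_apply_le w i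
  have h₁ : (x i + √ε * w i) ^ (a + 2) ≤ R ^ (a + 2) := rpow_le_rpow hy.le hyR ha
  have h₂ : (1 - ε) ^ ((a + 2) / 2) ≤ 1 := rpow_le_one (by linarith) (by linarith) (by linarith)
  have h₃ := rpow_le_rpow_of_nonpos (by positivity)
    (min_mul_one_add_sq_le hx (sqrt_nonneg ε) hεx hwi hy) hexp
  rw [mul_rpow hm.le (by positivity)] at h₃
  calc rescaledKernel a i x ε w
      ≤ R ^ (a + 2) * 1 * (min (1 / 2) (2 * x i ^ 2) ^ (-(a + n + 2) / 2) *
          (1 + ‖w‖ ^ 2) ^ (-(a + n + 2) / 2)) := by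
        unfold rescaledKernel
        have hA : 0 ≤ ‖w‖ ^ 2 + 4 * x i * (x i + √ε * w i) := by nlinarith [mul_pos hx hy]
        have hR : 0 ≤ R ^ (a + 2) := rpow_nonneg (hy.le.trans hyR) _
        exact mul_le_mul (mul_le_mul h₁ h₂ (rpow_nonneg (by linarith) _) hR) h₃
          (rpow_nonneg hA _) (by simpa using hR)
    _ = _ := by ring

theorem tendsto_rescaledKernel (hx : 0 < x i) (w : EuclideanSpace ℝ (Fin n)) :
    Tendsto (fun ε => rescaledKernel a i x ε w) (𝓝[>] 0)
      (𝓝 (x i ^ (a + 2) * (‖w‖ ^ 2 + (2 * x i) ^ 2) ^ (-(a + n + 2) / 2))) := by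
  have hcont : ContinuousAt (fun ε => rescaledKernel a i x ε w) 0 := by
    unfold rescaledKernel
    fun_prop (disch := left; simp only [sqrt_zero, zero_mul, add_zero, sub_zero]; positivity)
  convert hcont.tendsto.mono_left nhdsWithin_le_nhds using 2
  simp only [rescaledKernel, sqrt_zero, zero_mul, add_zero, sub_zero, one_rpow, mul_one]
  ring_nf

theorem norm_indicator_rescaledKernel_le (ha : 0 ≤ a + 2) (hx : 0 < x i)
    {U : Set (EuclideanSpace ℝ (Fin n))} (hUi : U ⊆ {y | 0 < y i}) {R : ℝ} (hR₀ : 0 ≤ R)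
    (hR : ∀ y ∈ U, ‖y‖ ≤ R) {ε : ℝ} (hε₀ : 0 ≤ ε) (hε₁ : ε ≤ 1) (hεx : 2 * √ε < x i)
    (w : EuclideanSpace ℝ (Fin n)) :
    ‖((x + √ε • ·) ⁻¹' U).indicator (rescaledKernel a i x ε) w‖ ≤
      R ^ (a + 2) * min (1 / 2) (2 * x i ^ 2) ^ (-(a + n + 2) / 2) *
        (1 + ‖w‖ ^ 2) ^ (-(a + n + 2) / 2) := by
  by_cases hw : x + √ε • w ∈ U
  · have hy : 0 < x i + √ε * w i := by simpa using hUi hw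
    have hyR : x i + √ε * w i ≤ R := by
      simpa using (le_abs_self _).trans ((PiLp.norm_apply_le _ i).trans (hR _ hw))
    rw [indicator_of_mem (by exact hw),
      norm_of_nonneg (rescaledKernel_nonneg a i x hx.le hε₁ hy.le)]
    exact rescaledKernel_le a i x ha hx hε₀ hε₁ hεx hy hyR
  · rw [indicator_of_notMem (by exact hw), norm_zero]
    positivity

theorem tendsto_integral_gker (ha : 0 < a + 2) {U : Set (EuclideanSpace ℝ (Fin n))}
    (hUo : IsOpen U) (hUb : Bornology.IsBounded U) (hUi : U ⊆ {y | 0 < y i}) (hxU : x ∈ U) :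
    Tendsto (fun ε => ∫ y in U, gker a i ε x y) (𝓝[>] 0)
      (𝓝 (∫ w : EuclideanSpace ℝ (Fin n),
        x i ^ (a + 2) * (‖w‖ ^ 2 + (2 * x i) ^ 2) ^ (-(a + n + 2) / 2))) := by
  have hx : 0 < x i := hUi hxU
  obtain ⟨R, hR⟩ := hUb.exists_norm_le
  have hsqrt : Tendsto (√·) (𝓝[>] (0 : ℝ)) (𝓝 0) := by
    simpa using (continuous_sqrt.tendsto 0).mono_left nhdsWithin_le_nhds
  have hpos : ∀ᶠ ε in 𝓝[>] (0 : ℝ), 0 < ε := self_mem_nhdsWithin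
  have hle_one : ∀ᶠ ε in 𝓝[>] (0 : ℝ), ε ≤ 1 :=
    mem_of_superset (Ioc_mem_nhdsGT one_pos) fun _ h => h.2
  have hsmall : ∀ᶠ ε in 𝓝[>] (0 : ℝ), 2 * √ε < x i :=
    (hsqrt.const_mul 2).eventually (gt_mem_nhds (by simpa using hx))
  have hmem : ∀ w, ∀ᶠ ε in 𝓝[>] (0 : ℝ), x + √ε • w ∈ U := fun w =>
    (by simpa using tendsto_const_nhds.add (hsqrt.smul_const w) :
      Tendsto (fun ε => x + √ε • w) (𝓝[>] 0) (𝓝 x)).eventually_mem (hUo.mem_nhds hxU)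
  have hint : Integrable fun w : EuclideanSpace ℝ (Fin n) => (1 + ‖w‖ ^ 2) ^ (-(a + n + 2) / 2) :=
    integrable_rpow_neg_one_add_norm_sq (by rw [finrank_euclideanSpace_fin]; linarith)
  refine (tendsto_integral_filter_of_dominated_convergence
    (F := fun ε => ((x + √ε • ·) ⁻¹' U).indicator (rescaledKernel a i x ε)) _
    (Eventually.of_forall fun ε => ?_) ?_
    (hint.const_mul (R ^ (a + 2) * min (1 / 2) (2 * x i ^ 2) ^ (-(a + n + 2) / 2)))
    (Eventually.of_forall fun w => ?_)).congr' ?_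
  · exact (Measurable.indicator (by unfold rescaledKernel; fun_prop)
      (hUo.preimage (by fun_prop)).measurableSet).aestronglyMeasurable
  · filter_upwards [hpos, hle_one, hsmall] with ε hε₀ hε₁ hεx
    exact Eventually.of_forall (norm_indicator_rescaledKernel_le a i x ha.le hx hUi
      ((norm_nonneg x).trans (hR x hxU)) hR hε₀.le hε₁ hεx)
  · refine (tendsto_rescaledKernel a i x hx w).congr' ?_
    filter_upwards [hmem w] with ε hε
    exact (indicator_of_mem (by exact hε) _).symm
  · filter_upwards [hpos, hle_one] with ε hε₀ hε₁
    exact (integral_gker_eq_integral_indicator_rescaledKernel a i x hUo.measurableSet hUi hx.le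
      hε₀ hε₁).symm

theorem integral_rpow_mul_norm_sq_add_sq_rpow {t : ℝ} (ht : 0 < t) :
    ∫ w : EuclideanSpace ℝ (Fin n), t ^ (a + 2) * (‖w‖ ^ 2 + (2 * t) ^ 2) ^ (-(a + n + 2) / 2) =
      2 ^ (-(a + 2)) * ∫ w : EuclideanSpace ℝ (Fin n), (1 + ‖w‖ ^ 2) ^ (-(a + n + 2) / 2) := by
  rw [integral_const_mul, integral_norm_sq_add_sq_rpow _ (by positivity),
    finrank_euclideanSpace_fin, ← mul_assoc, show (n : ℝ) - (a + n + 2) = -(a + 2) by ring,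
    mul_rpow two_pos.le ht.le, rpow_neg ht.le, rpow_neg two_pos.le]
  congr 1
  field_simp

end RescaledKernel

/-- For `n ≥ 2` and `a > 0` there is a constant `κ ∈ (0,∞)`, depending
only on `n` and `a`, such that for every bounded open `U` contained in the open upper
half-space and every `x ∈ U`, `∫_U g_ε(x,y) dy → κ` as `ε → 0⁺`. -/
theorem stmt_11 (n : ℕ) (hn : 2 ≤ n) (a : ℝ) (ha : 0 < a) :
    ∃ κ : ℝ, 0 < κ ∧
      ∀ U : Set (EuclideanSpace ℝ (Fin n)),
        IsOpen U → Bornology.IsBounded U →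
        U ⊆ {x : EuclideanSpace ℝ (Fin n) | 0 < x ⟨n - 1, by omega⟩} →
        ∀ x ∈ U,
          Tendsto (fun ε => ∫ y in U, gker a (⟨n - 1, by omega⟩ : Fin n) ε x y)
            (nhdsWithin 0 (Set.Ioi 0)) (nhds κ) := by
  refine ⟨2 ^ (-(a + 2)) * ∫ w : EuclideanSpace ℝ (Fin n), (1 + ‖w‖ ^ 2) ^ (-(a + n + 2) / 2),
    mul_pos (by positivity) (integral_one_add_norm_sq_rpow_pos _ ?_), ?_⟩
  · rw [finrank_euclideanSpace_fin]
    linarith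
  · intro U hUo hUb hUi x hxU
    rw [← integral_rpow_mul_norm_sq_add_sq_rpow a (hUi hxU)]
    exact tendsto_integral_gker a _ x (by linarith) hUo hUb hUi hxU
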